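/- arXiv:1909.13195 — 2 statements merged into one kernel-verified Lean document; each statement's English description precedes it below -/
import Mathlib

section
/- Suppose the sink Z is nonempty and V∖Z is finite. Then for every initial location a ∈ V and every initial rotor configuration ρ, the rotor walk with sink Z reaches a vertex of Z after finitely many steps (i.e. the walk terminates in finite time). -/
/-!
If the walk never reached `Z`, it would stay in the finite set `Zᶜ`, so some vertex `x` would be
visited infinitely often. Between consecutive visits of `x` its rotor advances by exactly one
step of `τ x`, and `τ x` cycles through all neighbours of `x`; hence the walk leaves `x`
towards every neighbour infinitely often, and every neighbour is visited infinitely often too.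
By connectedness this spreads to a vertex of `Z`, a contradiction.
-/

open Classical

universe u

variable {V : Type u}

/-- A rotor mechanism: for each vertex `x`, `τ x` restricts to a bijection of the
neighbor set of `x` having a single orbit. -/
def IsMechanism (G : SimpleGraph V) (τ : V → V → V) : Prop :=
  ∀ x : V, Set.BijOn (τ x) (G.neighborSet x) (G.neighborSet x) ∧
    ∀ y ∈ G.neighborSet x, ∀ z ∈ G.neighborSet x, ∃ i : ℕ, (τ x)^[i] y = z

/-- One step of the rotor walk with sink `Z`; the walk freezes once it reaches `Z`. -/
noncomputable def rotorStep [DecidableEq V] (τ : V → V → V) (Z : Set V) :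
    V × (V → V) → V × (V → V) := fun p =>
  if p.1 ∈ Z then p
  else (τ p.1 (p.2 p.1), Function.update p.2 p.1 (τ p.1 (p.2 p.1)))

/-- The rotor walk with initial location `a`, sink `Z` and initial rotor
configuration `ρ`: position (first component) and rotor configuration
(second component) at time `t`. -/
noncomputable def rotorWalk [DecidableEq V] (τ : V → V → V) (Z : Set V)
    (a : V) (ρ : V → V) (t : ℕ) : V × (V → V) :=
  (rotorStep τ Z)^[t] (a, ρ)

/-- `Z`-oriented spanning forests of `G`, viewed as rotor configurations,
normalized to be the identity on `Z` (the values on `Z` are inconsequential). -/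
def SFset (G : SimpleGraph V) (Z : Set V) : Set (V → V) :=
  {ρ | (∀ x ∉ Z, G.Adj x (ρ x)) ∧ (∀ x : V, ∃ ℓ : ℕ, ρ^[ℓ] x ∈ Z) ∧ ∀ x ∈ Z, ρ x = x}

/-- The eventual value of an eventually-constant sequence. -/
noncomputable def eventualVal (f : ℕ → V) : V :=
  if h : ∃ t : ℕ, ∀ s : ℕ, t ≤ s → f s = f t then f h.choose else f 0

/-- The final rotor configuration `σ(a, Z; ρ)` of the rotor walk. -/
noncomputable def finalConfig [DecidableEq V] (τ : V → V → V) (Z : Set V)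
    (a : V) (ρ : V → V) : V → V :=
  fun x => eventualVal fun t => (rotorWalk τ Z a ρ t).2 x

/-- `ξ_i(a_0, …, a_{i-1}, Z; ρ)`: the rotor configuration after `i` successive
walkers, started at `a_0, …, a_{i-1}`, have performed rotor walks with sink `Z`. -/
noncomputable def xiConfig [DecidableEq V] (τ : V → V → V) (Z : Set V) (av : ℕ → V) :
    ℕ → (V → V) → (V → V)
  | 0, ρ => ρ
  | i + 1, ρ => finalConfig τ Z (av i) (xiConfig τ Z av i ρ)

/-- The set of times at which the rotor walk (run until it first reaches the
sink `Z`) is at a vertex of `W`; its cardinality is the odometer `u(a,Z;ρ)(W)`. -/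
def visitTimes [DecidableEq V] (τ : V → V → V) (Z : Set V) (a : V) (ρ : V → V)
    (W : Set V) : Set ℕ :=
  {t | (rotorWalk τ Z a ρ t).1 ∈ W ∧ ∀ s < t, (rotorWalk τ Z a ρ s).1 ∉ Z}

/-- The event `E_{r,W}(a,Z)`: the rotor walk with initial location `a` and sink `Z`
visits `W` some time after visiting a vertex at graph distance at least `r` from `W`. -/
def Eset [DecidableEq V] (G : SimpleGraph V) (τ : V → V → V) (r : ℕ) (W : Set V)
    (a : V) (Z : Set V) : Set (V → V) :=
  {ρ | ∃ t₁ t₂ : ℕ, t₁ < t₂ ∧ (∀ s < t₂, (rotorWalk τ Z a ρ s).1 ∉ Z) ∧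
    (∀ w ∈ W, r ≤ G.dist w (rotorWalk τ Z a ρ t₁).1) ∧ (rotorWalk τ Z a ρ t₂).1 ∈ W}

/-- The event `D_r` (relative to the set `Z`): there is an oriented path in `ρ`
from a vertex at graph distance exactly `r` from `Z` to a vertex of `Z`. -/
def Dset (G : SimpleGraph V) (Z : Set V) (r : ℕ) : Set (V → V) :=
  {ρ | ∃ x : V, ∃ ℓ : ℕ, (∀ w ∈ Z, r ≤ G.dist w x) ∧ (∃ w ∈ Z, G.dist w x = r) ∧
    ρ^[ℓ] x ∈ Z}

/-- The transition matrix `P_Z` of simple random walk on `G` killed upon hitting `Z`. -/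
noncomputable def killedP (G : SimpleGraph V) [∀ v : V, Fintype (G.neighborSet v)]
    (Z : Set V) : Matrix {x : V // x ∉ Z} {x : V // x ∉ Z} ℝ :=
  fun x y => if G.Adj x.1 y.1 then (1 : ℝ) / (G.degree x.1) else 0

/-- The Green function `((I - P_Z)⁻¹)_{a,x}` of simple random walk killed at `Z`,
as a function of a pair of vertices (zero if `V ∖ Z` is infinite or `a ∈ Z` or `x ∈ Z`). -/
noncomputable def greenFn (G : SimpleGraph V) [DecidableEq V]
    [∀ v : V, Fintype (G.neighborSet v)] (Z : Set V) (a x : V) : ℝ :=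
  if h : ({y : V | y ∉ Z}).Finite ∧ a ∉ Z ∧ x ∉ Z then
    letI : Fintype {y : V // y ∉ Z} := h.1.fintype
    ((1 - killedP G Z)⁻¹) ⟨a, h.2.1⟩ ⟨x, h.2.2⟩
  else 0

section RotorWalk

variable [DecidableEq V] {τ : V → V → V} {Z : Set V} {a : V} {ρ : V → V}

theorem rotorWalk_succ (t : ℕ) :
    rotorWalk τ Z a ρ (t + 1) = rotorStep τ Z (rotorWalk τ Z a ρ t) :=
  Function.iterate_succ_apply' _ _ _

theorem rotorWalk_fst_succ_of_notMem {t : ℕ} (ht : (rotorWalk τ Z a ρ t).1 ∉ Z) :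
    (rotorWalk τ Z a ρ (t + 1)).1 =
      τ (rotorWalk τ Z a ρ t).1 ((rotorWalk τ Z a ρ t).2 (rotorWalk τ Z a ρ t).1) := by
  rw [rotorWalk_succ, rotorStep, if_neg ht]

theorem rotorWalk_snd_succ_of_notMem {t : ℕ} (ht : (rotorWalk τ Z a ρ t).1 ∉ Z) :
    (rotorWalk τ Z a ρ (t + 1)).2 =
      Function.update (rotorWalk τ Z a ρ t).2 (rotorWalk τ Z a ρ t).1
        (τ (rotorWalk τ Z a ρ t).1 ((rotorWalk τ Z a ρ t).2 (rotorWalk τ Z a ρ t).1)) := by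
  rw [rotorWalk_succ, rotorStep, if_neg ht]

theorem rotorWalk_rotor_adj {G : SimpleGraph V}
    (hτ : ∀ x, Set.MapsTo (τ x) (G.neighborSet x) (G.neighborSet x))
    (hρ : ∀ x, G.Adj x (ρ x)) (t : ℕ) (x : V) : G.Adj x ((rotorWalk τ Z a ρ t).2 x) := by
  induction t generalizing x with
  | zero => exact hρ x
  | succ t ih =>
    by_cases hZ : (rotorWalk τ Z a ρ t).1 ∈ Z
    · rw [rotorWalk_succ, rotorStep, if_pos hZ]
      exact ih x
    rw [rotorWalk_snd_succ_of_notMem hZ]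
    by_cases hx : x = (rotorWalk τ Z a ρ t).1
    · subst hx
      rw [Function.update_self]
      exact hτ _ (ih _)
    · rw [Function.update_of_ne hx]
      exact ih x

theorem rotorWalk_rotor_succ_of_ne {s : ℕ} {x : V} (hx : (rotorWalk τ Z a ρ s).1 ≠ x) :
    (rotorWalk τ Z a ρ (s + 1)).2 x = (rotorWalk τ Z a ρ s).2 x := by
  rw [rotorWalk_succ, rotorStep]
  split_ifs
  · rfl
  · exact Function.update_of_ne hx.symm _ _

theorem rotorWalk_rotor_eq_of_not_visited {x : V} {s t : ℕ} (hst : s ≤ t)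
    (hne : ∀ u, s ≤ u → u < t → (rotorWalk τ Z a ρ u).1 ≠ x) :
    (rotorWalk τ Z a ρ t).2 x = (rotorWalk τ Z a ρ s).2 x := by
  induction t, hst using Nat.le_induction with
  | base => rfl
  | succ t hst ih =>
    rw [rotorWalk_rotor_succ_of_ne (hne t hst t.lt_succ_self)]
    exact ih fun u hu₁ hu₂ => hne u hu₁ (by omega)

theorem exists_next_visit_rotor_eq {x : V} (hxZ : x ∉ Z)
    (hinf : {t | (rotorWalk τ Z a ρ t).1 = x}.Infinite) {s : ℕ}
    (hs : (rotorWalk τ Z a ρ s).1 = x) :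
    ∃ s', s < s' ∧ (rotorWalk τ Z a ρ s').1 = x ∧
      (rotorWalk τ Z a ρ s').2 x = τ x ((rotorWalk τ Z a ρ s).2 x) := by
  have hex : ∃ u, s < u ∧ (rotorWalk τ Z a ρ u).1 = x := by
    obtain ⟨u, hu, hsu⟩ := hinf.exists_gt s
    exact ⟨u, hsu, hu⟩
  obtain ⟨hlt, hvisit⟩ := Nat.find_spec hex
  refine ⟨Nat.find hex, hlt, hvisit, ?_⟩
  rw [rotorWalk_rotor_eq_of_not_visited hlt fun u hu₁ hu₂ hux => Nat.find_min hex hu₂ ⟨hu₁, hux⟩,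
    rotorWalk_snd_succ_of_notMem (hs ▸ hxZ), hs, Function.update_self]

theorem exists_visit_rotor_eq_iterate {x : V} (hxZ : x ∉ Z)
    (hinf : {t | (rotorWalk τ Z a ρ t).1 = x}.Infinite) {s : ℕ}
    (hs : (rotorWalk τ Z a ρ s).1 = x) (j : ℕ) :
    ∃ s', s ≤ s' ∧ (rotorWalk τ Z a ρ s').1 = x ∧
      (rotorWalk τ Z a ρ s').2 x = (τ x)^[j] ((rotorWalk τ Z a ρ s).2 x) := by
  induction j with
  | zero => exact ⟨s, le_rfl, hs, rfl⟩
  | succ j ih =>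
    obtain ⟨s', hss', hs', hrotor⟩ := ih
    obtain ⟨s'', hlt, hs'', hrotor'⟩ := exists_next_visit_rotor_eq hxZ hinf hs'
    exact ⟨s'', by omega, hs'', by rw [hrotor', hrotor, Function.iterate_succ_apply']⟩

theorem infinite_visits_of_adj {G : SimpleGraph V} (hτ : IsMechanism G τ)
    (hρ : ∀ x, G.Adj x (ρ x)) {x y : V} (hxZ : x ∉ Z)
    (hinf : {t | (rotorWalk τ Z a ρ t).1 = x}.Infinite) (hxy : G.Adj x y) :
    {t | (rotorWalk τ Z a ρ t).1 = y}.Infinite := by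
  refine Set.infinite_of_not_bddAbove fun ⟨T, hT⟩ => ?_
  obtain ⟨s, hs, hTs⟩ := hinf.exists_gt T
  have hrotor : G.Adj x ((rotorWalk τ Z a ρ s).2 x) :=
    rotorWalk_rotor_adj (fun x => (hτ x).1.mapsTo) hρ s x
  obtain ⟨i, hi⟩ := (hτ x).2 _ ((hτ x).1.mapsTo hrotor) y hxy
  obtain ⟨s', hss', hs', hrotor'⟩ := exists_visit_rotor_eq_iterate hxZ hinf hs i
  have hy : (rotorWalk τ Z a ρ (s' + 1)).1 = y := by
    rw [rotorWalk_fst_succ_of_notMem (hs' ▸ hxZ), hs', hrotor',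
      ← Function.iterate_succ_apply' (τ x), Function.iterate_succ_apply, hi]
  have := hT hy
  omega

theorem infinite_visits_of_reachable {G : SimpleGraph V} (hτ : IsMechanism G τ)
    (hρ : ∀ x, G.Adj x (ρ x)) (hcon : ∀ t, (rotorWalk τ Z a ρ t).1 ∉ Z) {x y : V}
    (hxy : G.Reachable x y) (hinf : {t | (rotorWalk τ Z a ρ t).1 = x}.Infinite) :
    {t | (rotorWalk τ Z a ρ t).1 = y}.Infinite := by
  obtain ⟨p⟩ := hxy
  induction p with
  | nil => exact hinf
  | cons hadj _ ih =>
    obtain ⟨t, ht⟩ := hinf.nonempty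
    exact ih (infinite_visits_of_adj hτ hρ (ht ▸ hcon t) hinf hadj)

theorem exists_infinite_visits_of_finite (hfin : (Zᶜ : Set V).Finite)
    (hcon : ∀ t, (rotorWalk τ Z a ρ t).1 ∉ Z) :
    ∃ x, {t | (rotorWalk τ Z a ρ t).1 = x}.Infinite := by
  have : Finite (Zᶜ : Set V) := hfin.to_subtype
  obtain ⟨y, hy⟩ := Finite.exists_infinite_fiber
    fun t => (⟨(rotorWalk τ Z a ρ t).1, hcon t⟩ : (Zᶜ : Set V))
  refine ⟨y.1, (Set.infinite_coe_iff.mp hy).mono fun t ht => ?_⟩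
  exact congrArg Subtype.val (Set.mem_singleton_iff.mp ht)

end RotorWalk

/-- If the sink `Z` is nonempty and `V ∖ Z` is finite, then for every
initial location and every initial rotor configuration the rotor walk reaches `Z`
in finite time. -/
theorem stmt2 {V : Type u} [DecidableEq V] (G : SimpleGraph V) (hconn : G.Connected)
    [∀ v : V, Fintype (G.neighborSet v)] (τ : V → V → V) (hτ : IsMechanism G τ)
    (Z : Set V) (hZ : Z.Nonempty) (hfin : (Zᶜ : Set V).Finite)
    (a : V) (ρ : V → V) (hρ : ∀ x : V, G.Adj x (ρ x)) :
    ∃ t : ℕ, (rotorWalk τ Z a ρ t).1 ∈ Z := by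
  by_contra! hcon
  obtain ⟨x, hx⟩ := exists_infinite_visits_of_finite hfin hcon
  obtain ⟨z, hz⟩ := hZ
  obtain ⟨t, ht⟩ :=
    (infinite_visits_of_reachable hτ hρ hcon (hconn.preconnected x z) hx).nonempty
  exact hcon t (ht ▸ hz)
end

section
/- Suppose the sink Z is nonempty and V∖Z is finite. Then for every a ∈ V, the map ρ ↦ σ(a,Z;ρ) is a bijection from SF(Z) to SF(Z); consequently, if ρ is sampled from the uniform probability measure OUSF(Z) on SF(Z), then the final rotor configuration σ(a,Z;ρ) also has law OUSF(Z). -/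
/-! The walk is reversible on the states it visits. Along the walk, `ρ_t` stays a forest oriented
towards `Z ∪ {X_t}` in which the tree of `X_t` contains `a`; on such states a step of the walk is
injective, because the previous position is the unique preimage of `X_{t+1}` under `ρ_{t+1}` that
`a` reaches before `Z` and from which the old forest still reaches `Z ∪ {X_t}`. An acyclic
configuration `(a, ρ)` has no such predecessor. Hence the walk never repeats a state, so it stops
in `Z` since there are finitely many states with `X_t ∉ Z`; and two walks with the same final
forest end in the same state, so peeling steps off backwards shows that they started from the same
configuration. As `SF(Z)` is finite, injectivity gives bijectivity. -/

open Classical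

universe u

variable {V : Type u}

open Function Set

section Iterate

variable {α : Type*}

theorem eq_of_iterate_eq_of_injOn {f : α → α} {P : Set α} (hf : InjOn f P) {x y : α}
    (hx : x ∉ f '' P) (hy : y ∉ f '' P) {m n : ℕ} (hxP : ∀ i < m, f^[i] x ∈ P)
    (hyP : ∀ j < n, f^[j] y ∈ P) (h : f^[m] x = f^[n] y) : m = n ∧ x = y := by
  induction m generalizing n with
  | zero =>
    cases n with
    | zero => exact ⟨rfl, h⟩
    | succ n =>
      rw [iterate_succ_apply'] at h
      exact (hx ⟨_, hyP n n.lt_succ_self, h.symm⟩).elim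
  | succ m ih =>
    cases n with
    | zero =>
      rw [iterate_succ_apply'] at h
      exact (hy ⟨_, hxP m m.lt_succ_self, h⟩).elim
    | succ n =>
      rw [iterate_succ_apply', iterate_succ_apply'] at h
      have h' := hf (hxP m m.lt_succ_self) (hyP n n.lt_succ_self) h
      obtain ⟨rfl, rfl⟩ := ih (fun i hi => hxP i (by omega)) (fun j hj => hyP j (by omega)) h'
      exact ⟨rfl, rfl⟩

/-- Injectivity would trace a repetition in the orbit back to the starting point. -/
theorem exists_iterate_notMem_of_injOn {f : α → α} {P S : Set α} (hf : InjOn f P) {x : α}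
    (hx : x ∉ f '' P) (hS : S.Finite) (hxS : ∀ i, f^[i] x ∈ S) : ∃ i, f^[i] x ∉ P := by
  by_contra! hP
  obtain ⟨i, j, hij, h⟩ := hS.exists_lt_map_eq_of_forall_mem hxS
  exact hij.ne (eq_of_iterate_eq_of_injOn hf hx hx (fun k _ => hP k) (fun k _ => hP k) h).1

variable [DecidableEq α]

theorem iterate_update_eq_iterate {f : α → α} {x c v : α} {k : ℕ}
    (h : ∀ j < k, f^[j] v ≠ x) : (update f x c)^[k] v = f^[k] v := by
  induction k with
  | zero => rfl
  | succ k ih =>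
    rw [iterate_succ_apply', iterate_succ_apply', ih (fun j hj => h j (by omega)),
      update_of_ne (h k k.lt_succ_self)]

theorem exists_iterate_update_eq {f : α → α} {a x : α} {S : Set α} {s : ℕ}
    (hs : f^[s] a = x) (hS : ∀ u < s, f^[u] a ∉ S) (hx : x ∉ S) (c : α) :
    ∃ s', (update f x c)^[s'] a = x ∧ ∀ u ≤ s', (update f x c)^[u] a ∉ S := by
  have hex : ∃ s, f^[s] a = x := ⟨s, hs⟩
  have hagree : ∀ u ≤ Nat.find hex, (update f x c)^[u] a = f^[u] a := fun u hu =>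
    iterate_update_eq_iterate fun j hj => Nat.find_min hex (by omega)
  refine ⟨Nat.find hex, by rw [hagree _ le_rfl, Nat.find_spec hex], fun u hu => ?_⟩
  rw [hagree u hu]
  rcases hu.lt_or_eq with hu | rfl
  · exact hS u (hu.trans_le (Nat.find_le hs))
  · rwa [Nat.find_spec hex]

/-- `y` lies on a `g`-cycle through `w₂` that avoids `S` and, as `g` is injective on cycles,
also `w₁`; so `y` cannot reach `insert w₁ S` under a map that agrees with `g` off `w₁`. -/
theorem eq_of_apply_eq_of_lt {g : α → α} {a y w₁ w₂ c : α} {S : Set α} {s₁ s₂ : ℕ}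
    (hs : s₁ < s₂) (h₁ : g^[s₁] a = w₁) (h₂ : g^[s₂] a = w₂) (hS : ∀ u ≤ s₂, g^[u] a ∉ S)
    (hw₁ : g w₁ = y) (hw₂ : g w₂ = y) (hr : ∃ ℓ, (update g w₁ c)^[ℓ] y ∈ insert w₁ S) :
    w₁ = w₂ := by
  by_contra hne
  have hy : ∀ j, g^[j] y = g^[j + (s₁ + 1)] a := fun j => by
    rw [iterate_add_apply, iterate_succ_apply', h₁, hw₁]
  have hper : IsPeriodicPt g (s₂ - s₁) y := by
    rw [IsPeriodicPt, IsFixedPt, hy, show s₂ - s₁ + (s₁ + 1) = s₂ + 1 by omega,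
      iterate_succ_apply', h₂, hw₂]
  have hper₂ : IsPeriodicPt g (s₂ - s₁) w₂ := by
    have := hper.apply_iterate (s₂ - s₁ - 1)
    rwa [hy, show s₂ - s₁ - 1 + (s₁ + 1) = s₂ by omega, h₂] at this
  have hcycle : ∀ j < s₂ - s₁, g^[j] y ∉ insert w₁ S := by
    rintro j hj (hj₁ | hjS)
    · exact hne (((hj₁ ▸ hper.apply_iterate j).eq_of_apply_eq_same hper₂ (by omega))
        (hw₁.trans hw₂.symm))
    · exact hS _ (by omega) (hy j ▸ hjS)
  have horbit : ∀ k, g^[k] y ∉ insert w₁ S := fun k => by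
    rw [← hper.iterate_mod_apply]
    exact hcycle _ (Nat.mod_lt _ (by omega))
  obtain ⟨ℓ, hℓ⟩ := hr
  rw [iterate_update_eq_iterate fun j _ hj => horbit j (Or.inl hj)] at hℓ
  exact horbit ℓ hℓ

end Iterate

theorem eventualVal_eq {f : ℕ → V} {T : ℕ} (h : ∀ s, T ≤ s → f s = f T) :
    eventualVal f = f T := by
  have hex : ∃ t, ∀ s, t ≤ s → f s = f t := ⟨T, h⟩
  rw [eventualVal, dif_pos hex, ← hex.choose_spec _ (le_max_left _ T), h _ (le_max_right _ _)]

/-- The state `(X_t, ρ_t)` of the rotor walk keeps `ρ_t` a `Z ∪ {X_t}`-oriented spanning forest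
in which `a` lies in the tree rooted at `X_t`. -/
def WalkInvariant (G : SimpleGraph V) (Z : Set V) (a : V) (p : V × (V → V)) : Prop :=
  (∀ x ∉ Z, G.Adj x (p.2 x)) ∧ (∀ v, ∃ ℓ, p.2^[ℓ] v ∈ insert p.1 Z) ∧
    ∃ s, p.2^[s] a = p.1 ∧ ∀ u < s, p.2^[u] a ∉ Z

theorem walkInvariant_mk {G : SimpleGraph V} {Z : Set V} {a : V} {ρ : V → V}
    (hρ : ρ ∈ SFset G Z) : WalkInvariant G Z a (a, ρ) :=
  ⟨hρ.1, fun v => (hρ.2.1 v).imp fun _ h => mem_insert_of_mem _ h, 0, rfl, by simp⟩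

theorem finite_setOf_adj_and_eqOn (G : SimpleGraph V) [∀ v, Fintype (G.neighborSet v)]
    {Z : Set V} (hfin : Zᶜ.Finite) (ρ : V → V) :
    {η : V → V | (∀ x ∉ Z, G.Adj x (η x)) ∧ EqOn η ρ Z}.Finite := by
  have : Finite ↥Zᶜ := hfin.to_subtype
  refine Set.Finite.of_finite_image (f := Zᶜ.domRestrict) ?_
    fun η₁ h₁ η₂ h₂ h => funext fun x => ?_
  · refine (Set.Finite.pi fun x : ↥Zᶜ => (G.neighborSet x).toFinite).subset ?_
    rintro _ ⟨η, hη, rfl⟩ x -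
    exact hη.1 x x.2
  · by_cases hx : x ∈ Z
    · exact (h₁.2 hx).trans (h₂.2 hx).symm
    · exact congrFun h ⟨x, hx⟩

theorem finite_SFset (G : SimpleGraph V) [∀ v, Fintype (G.neighborSet v)] {Z : Set V}
    (hfin : Zᶜ.Finite) : (SFset G Z).Finite :=
  (finite_setOf_adj_and_eqOn G hfin id).subset fun _ hρ => ⟨hρ.1, hρ.2.2⟩

section RotorWalk

variable [DecidableEq V] {G : SimpleGraph V} {τ : V → V → V} {Z : Set V} {a : V} {ρ : V → V}

theorem rotorStep_of_mem {p : V × (V → V)} (hp : p.1 ∈ Z) : rotorStep τ Z p = p := if_pos hp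

theorem rotorStep_of_notMem {p : V × (V → V)} (hp : p.1 ∉ Z) :
    rotorStep τ Z p = (τ p.1 (p.2 p.1), update p.2 p.1 (τ p.1 (p.2 p.1))) :=
  if_neg hp

theorem rotorStep_snd_of_mem (p : V × (V → V)) {x : V} (hx : x ∈ Z) :
    (rotorStep τ Z p).2 x = p.2 x := by
  by_cases hp : p.1 ∈ Z
  · rw [rotorStep_of_mem hp]
  · rw [rotorStep_of_notMem hp]
    exact update_of_ne (by rintro rfl; exact hp hx) _ _

theorem rotorStep_snd_self {p : V × (V → V)} (hp : p.1 ∉ Z) :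
    (rotorStep τ Z p).2 p.1 = (rotorStep τ Z p).1 := by
  rw [rotorStep_of_notMem hp]
  exact update_self _ _ _

theorem update_rotorStep_snd {p : V × (V → V)} (hp : p.1 ∉ Z) :
    update (rotorStep τ Z p).2 p.1 (p.2 p.1) = p.2 := by
  rw [rotorStep_of_notMem hp, update_idem, update_eq_self]

theorem eqOn_rotorWalk_snd (t : ℕ) : EqOn (rotorWalk τ Z a ρ t).2 ρ Z :=
  MapsTo.iterate (f := rotorStep τ Z) (s := {p | EqOn p.2 ρ Z})
    (fun p hp _ hx => (rotorStep_snd_of_mem p hx).trans (hp hx)) t (fun _ _ => rfl)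

theorem finalConfig_eq_of_mem {T : ℕ} (hT : (rotorWalk τ Z a ρ T).1 ∈ Z) :
    finalConfig τ Z a ρ = (rotorWalk τ Z a ρ T).2 := by
  have hfrozen : ∀ s, T ≤ s → rotorWalk τ Z a ρ s = rotorWalk τ Z a ρ T := fun s hs => by
    rw [rotorWalk, ← Nat.sub_add_cancel hs, iterate_add_apply]
    exact iterate_fixed (rotorStep_of_mem hT) _
  funext x
  exact eventualVal_eq fun s hs => by rw [hfrozen s hs]

theorem WalkInvariant.exists_iterate_rotorStep {p : V × (V → V)} (h : WalkInvariant G Z a p)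
    (hp : p.1 ∉ Z) :
    ∃ s, (rotorStep τ Z p).2^[s] a = p.1 ∧ ∀ u ≤ s, (rotorStep τ Z p).2^[u] a ∉ Z := by
  obtain ⟨s, hs, hsZ⟩ := h.2.2
  rw [rotorStep_of_notMem hp]
  exact exists_iterate_update_eq hs hsZ hp _

theorem walkInvariant_rotorStep (hτ : ∀ x, MapsTo (τ x) (G.neighborSet x) (G.neighborSet x))
    {p : V × (V → V)} (h : WalkInvariant G Z a p) : WalkInvariant G Z a (rotorStep τ Z p) := by
  by_cases hp : p.1 ∈ Z
  · rwa [rotorStep_of_mem hp]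
  obtain ⟨s, hs, hsZ⟩ := h.exists_iterate_rotorStep (τ := τ) hp
  have hself := rotorStep_snd_self (τ := τ) hp
  refine ⟨fun x hx => ?_, fun v => ?_, s + 1, by rw [iterate_succ_apply', hs, hself],
    fun u hu => hsZ u (by omega)⟩
  · rw [rotorStep_of_notMem hp]
    dsimp only
    rcases eq_or_ne x p.1 with rfl | hne
    · rw [update_self]
      exact hτ p.1 (h.1 p.1 hx)
    · rw [update_of_ne hne]
      exact h.1 x hx
  · have hex := h.2.1 v
    have hagree : (rotorStep τ Z p).2^[Nat.find hex] v = p.2^[Nat.find hex] v := by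
      rw [rotorStep_of_notMem hp]
      exact iterate_update_eq_iterate fun j hj hjx => Nat.find_min hex hj (hjx ▸ mem_insert _ _)
    rcases Nat.find_spec hex with hx | hZ
    · refine ⟨Nat.find hex + 1, ?_⟩
      rw [iterate_succ_apply', hagree, hx, hself]
      exact mem_insert _ _
    · exact ⟨Nat.find hex, mem_insert_of_mem _ (hagree ▸ hZ)⟩

theorem walkInvariant_rotorWalk (hτ : ∀ x, MapsTo (τ x) (G.neighborSet x) (G.neighborSet x))
    (hρ : ρ ∈ SFset G Z) (t : ℕ) : WalkInvariant G Z a (rotorWalk τ Z a ρ t) :=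
  MapsTo.iterate (f := rotorStep τ Z) (s := {p | WalkInvariant G Z a p})
    (fun _ hp => walkInvariant_rotorStep hτ hp) t (walkInvariant_mk hρ)

theorem injOn_rotorStep (hτ : ∀ x, InjOn (τ x) (G.neighborSet x)) :
    InjOn (rotorStep τ Z) {p | p.1 ∉ Z ∧ WalkInvariant G Z a p} := by
  rintro p ⟨hp, hpinv⟩ q ⟨hq, hqinv⟩ hpq
  obtain ⟨s, hs, hsZ⟩ := hpinv.exists_iterate_rotorStep (τ := τ) hp
  obtain ⟨s', hs', hsZ'⟩ := hqinv.exists_iterate_rotorStep (τ := τ) hq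
  have hr : ∃ ℓ, (update (rotorStep τ Z p).2 p.1 (p.2 p.1))^[ℓ] (rotorStep τ Z p).1 ∈
      insert p.1 Z := by
    rw [update_rotorStep_snd hp]; exact hpinv.2.1 _
  have hr' : ∃ ℓ, (update (rotorStep τ Z q).2 q.1 (q.2 q.1))^[ℓ] (rotorStep τ Z q).1 ∈
      insert q.1 Z := by
    rw [update_rotorStep_snd hq]; exact hqinv.2.1 _
  have hself := rotorStep_snd_self (τ := τ) hp
  have hself' := rotorStep_snd_self (τ := τ) hq
  rw [← hpq] at hs' hsZ' hr' hself'
  have hfst : p.1 = q.1 := by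
    rcases lt_trichotomy s s' with h | rfl | h
    · exact eq_of_apply_eq_of_lt h hs hs' hsZ' hself hself' hr
    · exact hs.symm.trans hs'
    · exact (eq_of_apply_eq_of_lt h hs' hs hsZ hself' hself hr').symm
  have hsnd : p.2 p.1 = q.2 p.1 := by
    refine hτ p.1 (hpinv.1 _ hp) (hfst ▸ hqinv.1 _ hq) ?_
    have := congrArg Prod.fst hpq
    rwa [rotorStep_of_notMem hp, rotorStep_of_notMem hq, ← hfst] at this
  refine Prod.ext hfst ?_
  rw [← update_rotorStep_snd hp, ← update_rotorStep_snd (τ := τ) hq, hpq, hsnd, hfst]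

/-- A step into `(a, ρ)` would close a cycle of `ρ` through `a` that avoids `Z`. -/
theorem mk_notMem_image_rotorStep (hρ : ∀ v, ∃ ℓ, ρ^[ℓ] v ∈ Z) :
    (a, ρ) ∉ rotorStep τ Z '' {p | p.1 ∉ Z ∧ WalkInvariant G Z a p} := by
  rintro ⟨p, ⟨hp, hpinv⟩, hpa⟩
  obtain ⟨s, hs, hsZ⟩ := hpinv.exists_iterate_rotorStep (τ := τ) hp
  have hself := rotorStep_snd_self (τ := τ) hp
  rw [hpa] at hs hsZ hself
  have hper : IsPeriodicPt ρ (s + 1) a := by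
    rw [IsPeriodicPt, IsFixedPt, iterate_succ_apply', hs]
    exact hself
  obtain ⟨ℓ, hℓ⟩ := hρ a
  rw [← hper.iterate_mod_apply] at hℓ
  exact hsZ _ (Nat.lt_succ_iff.1 (Nat.mod_lt _ s.succ_pos)) hℓ

variable [∀ v, Fintype (G.neighborSet v)]

theorem exists_rotorWalk_hittingTime
    (hτ : ∀ x, BijOn (τ x) (G.neighborSet x) (G.neighborSet x)) (hfin : Zᶜ.Finite)
    (hρ : ρ ∈ SFset G Z) :
    ∃ T, (rotorWalk τ Z a ρ T).1 ∈ Z ∧ ∀ t < T, (rotorWalk τ Z a ρ t).1 ∉ Z := by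
  have hex : ∃ T, (rotorWalk τ Z a ρ T).1 ∈ Z := by
    by_contra! hT
    have hinv := walkInvariant_rotorWalk (a := a) (fun x => (hτ x).mapsTo) hρ
    obtain ⟨i, hi⟩ := exists_iterate_notMem_of_injOn (injOn_rotorStep fun x => (hτ x).injOn)
      (mk_notMem_image_rotorStep hρ.2.1) (hfin.prod (finite_setOf_adj_and_eqOn G hfin ρ))
      fun i => ⟨hT i, (hinv i).1, eqOn_rotorWalk_snd i⟩
    exact hi ⟨hT i, hinv i⟩
  exact ⟨Nat.find hex, Nat.find_spec hex, fun _ => Nat.find_min hex⟩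

theorem finalConfig_mem_SFset (hτ : ∀ x, BijOn (τ x) (G.neighborSet x) (G.neighborSet x))
    (hfin : Zᶜ.Finite) (hρ : ρ ∈ SFset G Z) : finalConfig τ Z a ρ ∈ SFset G Z := by
  obtain ⟨T, hT, -⟩ := exists_rotorWalk_hittingTime (a := a) hτ hfin hρ
  obtain ⟨hadj, hreach, -⟩ := walkInvariant_rotorWalk (a := a) (fun x => (hτ x).mapsTo) hρ T
  rw [finalConfig_eq_of_mem hT]
  refine ⟨hadj, fun v => ?_, fun x hx => (eqOn_rotorWalk_snd T hx).trans (hρ.2.2 x hx)⟩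
  simpa only [insert_eq_of_mem hT] using hreach v

theorem injOn_finalConfig (hτ : ∀ x, BijOn (τ x) (G.neighborSet x) (G.neighborSet x))
    (hfin : Zᶜ.Finite) : InjOn (finalConfig τ Z a) (SFset G Z) := by
  intro ρ₁ hρ₁ ρ₂ hρ₂ h
  obtain ⟨T₁, hT₁, hpre₁⟩ := exists_rotorWalk_hittingTime (a := a) hτ hfin hρ₁
  obtain ⟨T₂, hT₂, hpre₂⟩ := exists_rotorWalk_hittingTime (a := a) hτ hfin hρ₂
  have hinv₁ := walkInvariant_rotorWalk (a := a) (fun x => (hτ x).mapsTo) hρ₁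
  have hinv₂ := walkInvariant_rotorWalk (a := a) (fun x => (hτ x).mapsTo) hρ₂
  rw [finalConfig_eq_of_mem hT₁, finalConfig_eq_of_mem hT₂] at h
  -- both walks stop at the first vertex of `Z` on the path of the common final forest from `a`
  have hfinal : rotorWalk τ Z a ρ₁ T₁ = rotorWalk τ Z a ρ₂ T₂ := by
    refine Prod.ext ?_ h
    obtain ⟨s₁, hs₁, hZ₁⟩ := (hinv₁ T₁).2.2
    obtain ⟨s₂, hs₂, hZ₂⟩ := (hinv₂ T₂).2.2
    rw [h] at hs₁ hZ₁
    obtain rfl : s₁ = s₂ := le_antisymm (not_lt.1 fun hlt => hZ₁ _ hlt (hs₂ ▸ hT₂))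
      (not_lt.1 fun hlt => hZ₂ _ hlt (hs₁ ▸ hT₁))
    exact hs₁.symm.trans hs₂
  have hρ := eq_of_iterate_eq_of_injOn (injOn_rotorStep fun x => (hτ x).injOn)
    (mk_notMem_image_rotorStep hρ₁.2.1) (mk_notMem_image_rotorStep hρ₂.2.1)
    (fun i hi => ⟨hpre₁ i hi, hinv₁ i⟩) (fun i hi => ⟨hpre₂ i hi, hinv₂ i⟩) hfinal
  exact congrArg Prod.snd hρ.2

end RotorWalk

/-- If `Z` is nonempty with `V ∖ Z` finite, then `ρ ↦ σ(a,Z;ρ)` is a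
bijection from `SF(Z)` to `SF(Z)`; consequently the uniform measure `OUSF(Z)` is
preserved by the final-configuration map. -/
theorem stmt4 {V : Type u} [DecidableEq V] (G : SimpleGraph V) (hconn : G.Connected)
    [∀ v : V, Fintype (G.neighborSet v)] (τ : V → V → V) (hτ : IsMechanism G τ)
    (Z : Set V) (hZ : Z.Nonempty) (hfin : (Zᶜ : Set V).Finite) (a : V) :
    Set.BijOn (finalConfig τ Z a) (SFset G Z) (SFset G Z) :=
  ((finite_SFset G hfin).injOn_iff_bijOn_of_mapsTo
    fun _ hρ => finalConfig_mem_SFset (fun x => (hτ x).1) hfin hρ).1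
    (injOn_finalConfig (fun x => (hτ x).1) hfin)
end
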